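/- arXiv:2603.03382 — 3 statements merged into one kernel-verified Lean document; each statement's English description precedes it below -/
import Mathlib

section
/- Let f(t,s,r)=γ(t)+sX(t)+rY(t) be a non-degenerate two-ruled hypersurface-germ in ℝ⁴ with constrictively adapted director curves, and let p be a singular point of f (a point where rank df_p<3). Then f is not a frontal at p: there exists no smooth map ν defined on a neighborhood of p with |ν|=1 such that ⟨df_q(v),ν(q)⟩=0 for all q in that neighborhood and all v∈T_qℝ³. -/
open scoped Topology
open Filter

noncomputable section

/-- Ambient space `ℝ⁴`. -/
abbrev E4 := Fin 4 → ℝ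

/-- The standard inner product on `ℝ⁴`. -/
def dot4 (u v : E4) : ℝ := ∑ i, u i * v i

/-- A point `p` is a singular point of `f` if `rank df_p < 3`. -/
def IsSingAt (f : ℝ × ℝ × ℝ → E4) (p : ℝ × ℝ × ℝ) : Prop :=
  Module.finrank ℝ ↥(LinearMap.range (fderiv ℝ f p).toLinearMap) < 3

/-- `f` is a frontal at `p` : there is a smooth unit normal field `ν` near `p`. -/
def IsFrontalAt (f : ℝ × ℝ × ℝ → E4) (p : ℝ × ℝ × ℝ) : Prop :=
  ∃ ν : ℝ × ℝ × ℝ → E4, ContDiff ℝ (⊤ : ℕ∞) ν ∧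
    ∀ᶠ q in 𝓝 p, dot4 (ν q) (ν q) = 1 ∧
      ∀ v : ℝ × ℝ × ℝ, dot4 (fderiv ℝ f q v) (ν q) = 0

lemma dot4_add_left (u v w : E4) : dot4 (u + v) w = dot4 u w + dot4 v w := by
  simp [dot4, add_mul, Finset.sum_add_distrib]

lemma dot4_smul_left (c : ℝ) (u w : E4) : dot4 (c • u) w = c * dot4 u w := by
  simp [dot4, Finset.mul_sum, mul_assoc]

lemma dot4_cont (c : E4) {g : ℝ → E4} (hg : Continuous g) :
    Continuous fun u => dot4 c (g u) := by
  simp only [dot4]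
  exact continuous_finset_sum _ fun i _ => continuous_const.mul ((continuous_apply i).comp hg)

lemma fderiv_ruled (γ X Y : ℝ → E4)
    (hγ : ContDiff ℝ (⊤ : ℕ∞) γ) (hX : ContDiff ℝ (⊤ : ℕ∞) X) (hY : ContDiff ℝ (⊤ : ℕ∞) Y)
    (q v : ℝ × ℝ × ℝ) :
    fderiv ℝ (fun p : ℝ × ℝ × ℝ => γ p.1 + p.2.1 • X p.1 + p.2.2 • Y p.1) q v
      = v.1 • deriv γ q.1 + (q.2.1 * v.1) • deriv X q.1 + (q.2.2 * v.1) • deriv Y q.1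
        + v.2.1 • X q.1 + v.2.2 • Y q.1 := by
  have hγd : HasDerivAt γ (deriv γ q.1) q.1 := (hγ.differentiable (by simp) q.1).hasDerivAt
  have hXd : HasDerivAt X (deriv X q.1) q.1 := (hX.differentiable (by simp) q.1).hasDerivAt
  have hYd : HasDerivAt Y (deriv Y q.1) q.1 := (hY.differentiable (by simp) q.1).hasDerivAt
  have h1 : HasFDerivAt (fun p : ℝ × ℝ × ℝ => p.1)
      (ContinuousLinearMap.fst ℝ ℝ (ℝ × ℝ)) q := hasFDerivAt_fst
  have hγ1 : HasFDerivAt (fun p : ℝ × ℝ × ℝ => γ p.1)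
      (((1 : ℝ →L[ℝ] ℝ).smulRight (deriv γ q.1)).comp
        (ContinuousLinearMap.fst ℝ ℝ (ℝ × ℝ))) q := hγd.hasFDerivAt.comp q h1
  have hX1 : HasFDerivAt (fun p : ℝ × ℝ × ℝ => X p.1)
      (((1 : ℝ →L[ℝ] ℝ).smulRight (deriv X q.1)).comp
        (ContinuousLinearMap.fst ℝ ℝ (ℝ × ℝ))) q := hXd.hasFDerivAt.comp q h1
  have hY1 : HasFDerivAt (fun p : ℝ × ℝ × ℝ => Y p.1)
      (((1 : ℝ →L[ℝ] ℝ).smulRight (deriv Y q.1)).comp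
        (ContinuousLinearMap.fst ℝ ℝ (ℝ × ℝ))) q := hYd.hasFDerivAt.comp q h1
  have hs1 : HasFDerivAt (fun p : ℝ × ℝ × ℝ => p.2.1)
      ((ContinuousLinearMap.fst ℝ ℝ ℝ).comp (ContinuousLinearMap.snd ℝ ℝ (ℝ × ℝ))) q :=
    hasFDerivAt_snd.fst
  have hr1 : HasFDerivAt (fun p : ℝ × ℝ × ℝ => p.2.2)
      ((ContinuousLinearMap.snd ℝ ℝ ℝ).comp (ContinuousLinearMap.snd ℝ ℝ (ℝ × ℝ))) q :=
    hasFDerivAt_snd.snd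
  have hT : HasFDerivAt (fun p : ℝ × ℝ × ℝ => γ p.1 + p.2.1 • X p.1 + p.2.2 • Y p.1)
      (((((1 : ℝ →L[ℝ] ℝ).smulRight (deriv γ q.1)).comp
          (ContinuousLinearMap.fst ℝ ℝ (ℝ × ℝ)))
        + (q.2.1 • (((1 : ℝ →L[ℝ] ℝ).smulRight (deriv X q.1)).comp
              (ContinuousLinearMap.fst ℝ ℝ (ℝ × ℝ)))
          + ((ContinuousLinearMap.fst ℝ ℝ ℝ).comp
              (ContinuousLinearMap.snd ℝ ℝ (ℝ × ℝ))).smulRight (X q.1)))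
        + (q.2.2 • (((1 : ℝ →L[ℝ] ℝ).smulRight (deriv Y q.1)).comp
              (ContinuousLinearMap.fst ℝ ℝ (ℝ × ℝ)))
          + ((ContinuousLinearMap.snd ℝ ℝ ℝ).comp
              (ContinuousLinearMap.snd ℝ ℝ (ℝ × ℝ))).smulRight (Y q.1))) q := by
    exact (hγ1.add (hs1.smul hX1)).add (hr1.smul hY1)
  rw [hT.fderiv]
  simp only [ContinuousLinearMap.add_apply, ContinuousLinearMap.smul_apply,
    ContinuousLinearMap.smulRight_apply, ContinuousLinearMap.coe_comp', Function.comp_apply,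
    ContinuousLinearMap.coe_fst', ContinuousLinearMap.coe_snd',
    ContinuousLinearMap.one_apply]
  module

/-- A non-degenerate two-ruled hypersurface-germ in `ℝ⁴` with constrictively adapted
director curves is never a frontal at a singular point. -/
theorem stmt0 (γ X Y : ℝ → E4)
    (hγ : ContDiff ℝ (⊤ : ℕ∞) γ) (hX : ContDiff ℝ (⊤ : ℕ∞) X) (hY : ContDiff ℝ (⊤ : ℕ∞) Y)
    (hγ0 : γ 0 = 0)
    -- constrictively adapted director curves
    (hXunit : ∀ᶠ t in 𝓝 (0:ℝ), dot4 (X t) (X t) = 1)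
    (hYunit : ∀ᶠ t in 𝓝 (0:ℝ), dot4 (Y t) (Y t) = 1)
    (hXY : ∀ᶠ t in 𝓝 (0:ℝ), dot4 (X t) (Y t) = 0)
    (hXY' : ∀ᶠ t in 𝓝 (0:ℝ), dot4 (X t) (deriv Y t) = 0)
    -- non-degeneracy: X, Y, X', Y' are linearly independent near 0
    (hnd : ∀ᶠ t in 𝓝 (0:ℝ),
      LinearIndependent ℝ ![X t, Y t, deriv X t, deriv Y t])
    (F : ℝ × ℝ × ℝ → E4)
    (hF : F = fun p => γ p.1 + p.2.1 • X p.1 + p.2.2 • Y p.1)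
    (s r : ℝ)
    (hsing : IsSingAt F (0, s, r)) :
    ¬ IsFrontalAt F (0, s, r) := by
  subst hF
  rintro ⟨ν, hνsm, hev⟩
  have hli : LinearIndependent ℝ ![X 0, Y 0, deriv X 0, deriv Y 0] := hnd.self_of_nhds
  have key := fderiv_ruled γ X Y hγ hX hY
  set F : ℝ × ℝ × ℝ → E4 := fun p => γ p.1 + p.2.1 • X p.1 + p.2.2 • Y p.1 with hFdef
  set v0 : E4 := deriv γ 0 + s • deriv X 0 + r • deriv Y 0 with hv0
  -- images of the coordinate directions
  have eX : ∀ u w : ℝ, fderiv ℝ F (0, u, w) (0, 1, 0) = X 0 := fun u w => by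
    simpa using key (0, u, w) (0, 1, 0)
  have eY : ∀ u w : ℝ, fderiv ℝ F (0, u, w) (0, 0, 1) = Y 0 := fun u w => by
    simpa using key (0, u, w) (0, 0, 1)
  have eT : ∀ u w : ℝ, fderiv ℝ F (0, u, w) (1, 0, 0)
      = deriv γ 0 + u • deriv X 0 + w • deriv Y 0 := fun u w => by
    simpa using key (0, u, w) (1, 0, 0)
  -- singularity: v0 lies in the span of X 0 and Y 0
  have hmem : v0 ∈ Submodule.span ℝ ({X 0, Y 0} : Set E4) := by
    by_contra hv
    have hli2 : LinearIndependent ℝ ![X 0, Y 0] := by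
      have h := hli.comp ![0, 1] (by decide)
      have he : ![X 0, Y 0, deriv X 0, deriv Y 0] ∘ ![(0 : Fin 4), 1] = ![X 0, Y 0] := by
        funext i; fin_cases i <;> rfl
      rwa [he] at h
    have hr2 : Set.range ![X 0, Y 0] = ({X 0, Y 0} : Set E4) := by
      ext w
      simp only [Set.mem_range, Set.mem_insert_iff, Set.mem_singleton_iff, Fin.exists_fin_two,
        Matrix.cons_val_zero, Matrix.cons_val_one, Matrix.head_cons]
      constructor <;> rintro (h | h) <;> simp [h]
    have hsnoc : LinearIndependent ℝ (Fin.snoc ![X 0, Y 0] v0 : Fin 3 → E4) := by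
      rw [linearIndependent_fin_snoc]
      exact ⟨hli2, by rwa [hr2]⟩
    have heq3 : (Fin.snoc ![X 0, Y 0] v0 : Fin 3 → E4) = ![X 0, Y 0, v0] := by
      funext i; fin_cases i <;> simp [Fin.snoc] <;> rfl
    rw [heq3] at hsnoc
    have hsub : Set.range ![X 0, Y 0, v0]
        ⊆ (LinearMap.range (fderiv ℝ F (0, s, r)).toLinearMap : Set E4) := by
      rintro w ⟨i, rfl⟩
      fin_cases i
      · exact LinearMap.mem_range.mpr ⟨(0, 1, 0), by simpa using eX s r⟩
      · exact LinearMap.mem_range.mpr ⟨(0, 0, 1), by simpa using eY s r⟩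
      · exact LinearMap.mem_range.mpr ⟨(1, 0, 0), by simpa using eT s r⟩
    have hle := Submodule.finrank_mono (Submodule.span_le.mpr hsub)
    rw [finrank_span_eq_card hsnoc] at hle
    simp only [Fintype.card_fin] at hle
    unfold IsSingAt at hsing
    omega
  obtain ⟨a, b, hab⟩ := Submodule.mem_span_pair.mp hmem
  -- orthogonality at the point itself
  obtain ⟨hunit, horth⟩ := hev.self_of_nhds
  have hX0 : dot4 (X 0) (ν (0, s, r)) = 0 := by
    have h := horth (0, 1, 0); rwa [eX s r] at h
  have hY0 : dot4 (Y 0) (ν (0, s, r)) = 0 := by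
    have h := horth (0, 0, 1); rwa [eY s r] at h
  -- ⟨X'(0), ν⟩ = 0 via the s-line
  have hXd0 : dot4 (deriv X 0) (ν (0, s, r)) = 0 := by
    have hline : Filter.Tendsto (fun u : ℝ => ((0 : ℝ), u, r)) (𝓝 s) (𝓝 ((0 : ℝ), s, r)) :=
      ((continuous_const.prodMk (continuous_id.prodMk continuous_const)).tendsto s)
    have hevS := hline.eventually hev
    have hzeroS : ∀ᶠ u in 𝓝[≠] s, dot4 (deriv X 0) (ν (0, u, r)) = 0 := by
      filter_upwards [hevS.filter_mono nhdsWithin_le_nhds, self_mem_nhdsWithin] with u hu hne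
      simp only [Set.mem_compl_iff, Set.mem_singleton_iff] at hne
      obtain ⟨-, ho⟩ := hu
      have h1 := ho (1, 0, 0)
      have h2 := ho (0, 1, 0)
      have h3 := ho (0, 0, 1)
      rw [eX u r] at h2
      rw [eY u r] at h3
      rw [eT u r] at h1
      have e2 : deriv γ 0 + u • deriv X 0 + r • deriv Y 0
          = a • X 0 + b • Y 0 + (u - s) • deriv X 0 := by
        rw [hab, hv0]; module
      rw [e2, dot4_add_left, dot4_add_left, dot4_smul_left, dot4_smul_left, dot4_smul_left,
        h2, h3] at h1
      have h4 : (u - s) * dot4 (deriv X 0) (ν (0, u, r)) = 0 := by linarith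
      rcases mul_eq_zero.mp h4 with h | h
      · exact absurd (by linarith : u = s) hne
      · exact h
    have hcont : Continuous fun u : ℝ => dot4 (deriv X 0) (ν (0, u, r)) :=
      dot4_cont _ (hνsm.continuous.comp
        (continuous_const.prodMk (continuous_id.prodMk continuous_const)))
    exact tendsto_nhds_unique ((hcont.tendsto s).mono_left nhdsWithin_le_nhds)
      (tendsto_const_nhds.congr' (hzeroS.mono fun u h => h.symm))
  -- ⟨Y'(0), ν⟩ = 0 via the r-line
  have hYd0 : dot4 (deriv Y 0) (ν (0, s, r)) = 0 := by
    have hline : Filter.Tendsto (fun u : ℝ => ((0 : ℝ), s, u)) (𝓝 r) (𝓝 ((0 : ℝ), s, r)) :=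
      ((continuous_const.prodMk (continuous_const.prodMk continuous_id)).tendsto r)
    have hevR := hline.eventually hev
    have hzeroR : ∀ᶠ u in 𝓝[≠] r, dot4 (deriv Y 0) (ν (0, s, u)) = 0 := by
      filter_upwards [hevR.filter_mono nhdsWithin_le_nhds, self_mem_nhdsWithin] with u hu hne
      simp only [Set.mem_compl_iff, Set.mem_singleton_iff] at hne
      obtain ⟨-, ho⟩ := hu
      have h1 := ho (1, 0, 0)
      have h2 := ho (0, 1, 0)
      have h3 := ho (0, 0, 1)
      rw [eX s u] at h2
      rw [eY s u] at h3
      rw [eT s u] at h1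
      have e2 : deriv γ 0 + s • deriv X 0 + u • deriv Y 0
          = a • X 0 + b • Y 0 + (u - r) • deriv Y 0 := by
        rw [hab, hv0]; module
      rw [e2, dot4_add_left, dot4_add_left, dot4_smul_left, dot4_smul_left, dot4_smul_left,
        h2, h3] at h1
      have h4 : (u - r) * dot4 (deriv Y 0) (ν (0, s, u)) = 0 := by linarith
      rcases mul_eq_zero.mp h4 with h | h
      · exact absurd (by linarith : u = r) hne
      · exact h
    have hcont : Continuous fun u : ℝ => dot4 (deriv Y 0) (ν (0, s, u)) :=
      dot4_cont _ (hνsm.continuous.comp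
        (continuous_const.prodMk (continuous_const.prodMk continuous_id)))
    exact tendsto_nhds_unique ((hcont.tendsto r).mono_left nhdsWithin_le_nhds)
      (tendsto_const_nhds.congr' (hzeroR.mono fun u h => h.symm))
  -- the four vectors span everything, so ν vanishes: contradiction
  have htop : Submodule.span ℝ (Set.range ![X 0, Y 0, deriv X 0, deriv Y 0]) = ⊤ :=
    hli.span_eq_top_of_card_eq_finrank (by simp [Module.finrank_fin_fun])
  have hνmem : ν (0, s, r) ∈ Submodule.span ℝ (Set.range ![X 0, Y 0, deriv X 0, deriv Y 0]) :=
    htop ▸ Submodule.mem_top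
  have hzero : dot4 (ν (0, s, r)) (ν (0, s, r)) = 0 := by
    refine Submodule.span_induction (p := fun w _ => dot4 w (ν (0, s, r)) = 0)
      ?_ ?_ ?_ ?_ hνmem
    · rintro w ⟨i, rfl⟩
      fin_cases i
      · simpa using hX0
      · simpa using hY0
      · simpa using hXd0
      · simpa using hYd0
    · simp [dot4]
    · intro x y _ _ hx hy; rw [dot4_add_left, hx, hy, add_zero]
    · intro c x _ hx; rw [dot4_smul_left, hx, mul_zero]
  exact one_ne_zero (hunit.symm.trans hzero)
end
end

section
/- Let f(t,s,r)=γ(t)+sX(t)+rY(t) be a pseudo-non-degenerate two-ruled hypersurface-germ in ℝ⁴, normalized so that X,Y are constrictively adapted, dim span{X,Y,X'}=3 and |X'|=1, with functions a,b₁,b₂,b₃,b₄ defined by Y'=aX' and γ'=b₁X+b₂Y+b₃X'+b₄Z (Z=X∧Y∧X'). Then f is a frontal at a singular point if and only if b₄(t)=0 for all t near 0; in that case ν=X∧Y∧X' is a unit normal vector of f. -/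
open scoped Topology
open Filter

noncomputable section

/-- `det(u,v,w,x)` for four vectors of `ℝ⁴`. -/
def det4 (u v w x : E4) : ℝ := Matrix.det (Matrix.of ![u, v, w, x])

/-- The triple exterior (cross) product `u ∧ v ∧ w` in `ℝ⁴`, characterized by
`⟨tcross u v w, x⟩ = det(x,u,v,w)`. -/
def tcross (u v w : E4) : E4 := fun i => det4 (Pi.single i 1) u v w

/- ----------------  auxiliary lemmas ---------------- -/

lemma det_fin_four' (A : Matrix (Fin 4) (Fin 4) ℝ) : A.det =
    A 0 0 * (A 1 1 * A 2 2 * A 3 3 - A 1 1 * A 2 3 * A 3 2 - A 1 2 * A 2 1 * A 3 3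
      + A 1 2 * A 2 3 * A 3 1 + A 1 3 * A 2 1 * A 3 2 - A 1 3 * A 2 2 * A 3 1)
    - A 0 1 * (A 1 0 * A 2 2 * A 3 3 - A 1 0 * A 2 3 * A 3 2 - A 1 2 * A 2 0 * A 3 3
      + A 1 2 * A 2 3 * A 3 0 + A 1 3 * A 2 0 * A 3 2 - A 1 3 * A 2 2 * A 3 0)
    + A 0 2 * (A 1 0 * A 2 1 * A 3 3 - A 1 0 * A 2 3 * A 3 1 - A 1 1 * A 2 0 * A 3 3
      + A 1 1 * A 2 3 * A 3 0 + A 1 3 * A 2 0 * A 3 1 - A 1 3 * A 2 1 * A 3 0)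
    - A 0 3 * (A 1 0 * A 2 1 * A 3 2 - A 1 0 * A 2 2 * A 3 1 - A 1 1 * A 2 0 * A 3 2
      + A 1 1 * A 2 2 * A 3 0 + A 1 2 * A 2 0 * A 3 1 - A 1 2 * A 2 1 * A 3 0) := by
  rw [Matrix.det_succ_row_zero, Fin.sum_univ_four]
  norm_num [Matrix.det_fin_three, Matrix.submatrix_apply, Fin.succAbove, Fin.lt_def,
    show (Fin.succ 2 : Fin 4) = 3 by rfl, show (Fin.castSucc 2 : Fin 4) = 2 by rfl,
    show ((3:Fin 4):ℕ) = 3 by rfl]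
  ring

lemma det4_eq (u v w x : E4) : det4 u v w x =
    u 0 * (v 1 * w 2 * x 3 - v 1 * w 3 * x 2 - v 2 * w 1 * x 3
      + v 2 * w 3 * x 1 + v 3 * w 1 * x 2 - v 3 * w 2 * x 1)
    - u 1 * (v 0 * w 2 * x 3 - v 0 * w 3 * x 2 - v 2 * w 0 * x 3
      + v 2 * w 3 * x 0 + v 3 * w 0 * x 2 - v 3 * w 2 * x 0)
    + u 2 * (v 0 * w 1 * x 3 - v 0 * w 3 * x 1 - v 1 * w 0 * x 3
      + v 1 * w 3 * x 0 + v 3 * w 0 * x 1 - v 3 * w 1 * x 0)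
    - u 3 * (v 0 * w 1 * x 2 - v 0 * w 2 * x 1 - v 1 * w 0 * x 2
      + v 1 * w 2 * x 0 + v 2 * w 0 * x 1 - v 2 * w 1 * x 0) := by
  rw [det4, det_fin_four']
  simp [Matrix.cons_val_zero, Matrix.cons_val_one, Matrix.head_cons]

lemma dot4_comm (u v : E4) : dot4 u v = dot4 v u := by
  simp [dot4, mul_comm]

lemma dot4_zero_left (w : E4) : dot4 0 w = 0 := by simp [dot4]

lemma dot4_tc1 (u v w : E4) : dot4 u (tcross u v w) = 0 := by
  simp [dot4, tcross, det4_eq, Fin.sum_univ_four, Pi.single_apply]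
  ring

lemma dot4_tc2 (u v w : E4) : dot4 v (tcross u v w) = 0 := by
  simp [dot4, tcross, det4_eq, Fin.sum_univ_four, Pi.single_apply]
  ring

lemma dot4_tc3 (u v w : E4) : dot4 w (tcross u v w) = 0 := by
  simp [dot4, tcross, det4_eq, Fin.sum_univ_four, Pi.single_apply]
  ring

set_option maxHeartbeats 2000000 in
lemma gram4 (u v w : E4) : dot4 (tcross u v w) (tcross u v w) =
    dot4 u u * (dot4 v v * dot4 w w - dot4 v w * dot4 v w)
    - dot4 u v * (dot4 u v * dot4 w w - dot4 v w * dot4 u w)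
    + dot4 u w * (dot4 u v * dot4 v w - dot4 v v * dot4 u w) := by
  simp [dot4, tcross, det4_eq, Fin.sum_univ_four, Pi.single_apply]
  ring

lemma tcross_unit (u v w : E4) (huu : dot4 u u = 1) (hvv : dot4 v v = 1) (hww : dot4 w w = 1)
    (huv : dot4 u v = 0) (huw : dot4 u w = 0) (hvw : dot4 v w = 0) :
    dot4 (tcross u v w) (tcross u v w) = 1 := by
  rw [gram4, huu, hvv, hww, huv, huw, hvw]; ring

lemma parseval (u v w n : E4) (huu : dot4 u u = 1) (hvv : dot4 v v = 1) (hww : dot4 w w = 1)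
    (huv : dot4 u v = 0) (huw : dot4 u w = 0) (hvw : dot4 v w = 0) :
    dot4 n n = dot4 u n ^ 2 + dot4 v n ^ 2 + dot4 w n ^ 2 + dot4 (tcross u v w) n ^ 2 := by
  set Z := tcross u v w with hZdef
  have hZZ : dot4 Z Z = 1 := tcross_unit u v w huu hvv hww huv huw hvw
  have huZ : dot4 u Z = 0 := dot4_tc1 u v w
  have hvZ : dot4 v Z = 0 := dot4_tc2 u v w
  have hwZ : dot4 w Z = 0 := dot4_tc3 u v w
  have hvu : dot4 v u = 0 := (dot4_comm u v) ▸ huv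
  have hwu : dot4 w u = 0 := (dot4_comm u w) ▸ huw
  have hwv : dot4 w v = 0 := (dot4_comm v w) ▸ hvw
  have hZu : dot4 Z u = 0 := (dot4_comm u Z) ▸ huZ
  have hZv : dot4 Z v = 0 := (dot4_comm v Z) ▸ hvZ
  have hZw : dot4 Z w = 0 := (dot4_comm w Z) ▸ hwZ
  set M : Matrix (Fin 4) (Fin 4) ℝ := Matrix.of ![u, v, w, Z] with hMdef
  have key : ∀ i j, (M * M.transpose) i j = dot4 (M i) (M j) := fun i j => by
    simp [Matrix.mul_apply, dot4]
  have h1 : M * M.transpose = 1 := by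
    ext i j
    rw [key]
    fin_cases i <;> fin_cases j <;>
      simp [hMdef, Matrix.one_apply] <;>
      first
        | exact huu | exact hvv | exact hww | exact hZZ
        | exact huv | exact huw | exact hvw | exact huZ | exact hvZ | exact hwZ
        | exact hvu | exact hwu | exact hwv | exact hZu | exact hZv | exact hZw
  have h2 : M.transpose * M = 1 := mul_eq_one_comm.mp h1
  have e1 : dot4 n n = dotProduct n ((M.transpose * M).mulVec n) := by
    rw [h2, Matrix.one_mulVec]; simp [dot4, dotProduct]
  rw [e1, ← Matrix.mulVec_mulVec, Matrix.dotProduct_mulVec, Matrix.vecMul_transpose]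
  simp [dotProduct, Matrix.mulVec, Fin.sum_univ_four, hMdef, dot4]
  ring

lemma hasDerivAt_dot4 {f g : ℝ → E4} {f' g' : E4} {t : ℝ}
    (hf : HasDerivAt f f' t) (hg : HasDerivAt g g' t) :
    HasDerivAt (fun t => dot4 (f t) (g t)) (dot4 f' (g t) + dot4 (f t) g') t := by
  have H : HasDerivAt (fun t => ∑ i : Fin 4, f t i * g t i)
      (∑ i : Fin 4, (f' i * g t i + f t i * g' i)) t :=
    HasDerivAt.fun_sum fun i _ => (hasDerivAt_pi.1 hf i).mul (hasDerivAt_pi.1 hg i)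
  simpa [dot4, Finset.sum_add_distrib] using H

lemma contDiff_deriv_curve {f : ℝ → E4} (hf : ContDiff ℝ (⊤ : ℕ∞) f) : ContDiff ℝ (⊤ : ℕ∞) (deriv f) := by
  have h : ContDiff ℝ (⊤ : ℕ∞) (fderiv ℝ f) := hf.fderiv_right (by simp)
  have h2 : ContDiff ℝ (⊤ : ℕ∞) (fun t => fderiv ℝ f t 1) := h.clm_apply contDiff_const
  have e : deriv f = fun t => fderiv ℝ f t 1 := by
    funext t; exact (fderiv_apply_one_eq_deriv).symm
  rw [e]; exact h2

lemma contDiff_tcross {X Y W : ℝ → E4} (hX : ContDiff ℝ (⊤ : ℕ∞) X) (hY : ContDiff ℝ (⊤ : ℕ∞) Y)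
    (hW : ContDiff ℝ (⊤ : ℕ∞) W) : ContDiff ℝ (⊤ : ℕ∞) (fun t => tcross (X t) (Y t) (W t)) := by
  have hXc : ∀ j, ContDiff ℝ (⊤ : ℕ∞) (fun t => X t j) := fun j => contDiff_pi.1 hX j
  have hYc : ∀ j, ContDiff ℝ (⊤ : ℕ∞) (fun t => Y t j) := fun j => contDiff_pi.1 hY j
  have hWc : ∀ j, ContDiff ℝ (⊤ : ℕ∞) (fun t => W t j) := fun j => contDiff_pi.1 hW j
  rw [contDiff_pi]
  intro i
  simp only [tcross, det4_eq]
  fun_prop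

lemma continuous_dot4 {A : Type*} [TopologicalSpace A] {f g : A → E4}
    (hf : Continuous f) (hg : Continuous g) : Continuous fun x => dot4 (f x) (g x) := by
  simp only [dot4]
  exact continuous_finset_sum _ fun i _ =>
    ((continuous_apply i).comp hf).mul ((continuous_apply i).comp hg)

lemma fderiv_ruled_apply {γ X Y : ℝ → E4} (hγ : Differentiable ℝ γ) (hX : Differentiable ℝ X)
    (hY : Differentiable ℝ Y) (q v : ℝ × ℝ × ℝ) :
    fderiv ℝ (fun p : ℝ × ℝ × ℝ => γ p.1 + p.2.1 • X p.1 + p.2.2 • Y p.1) q v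
      = v.1 • deriv γ q.1 + (q.2.1 • (v.1 • deriv X q.1) + v.2.1 • X q.1)
        + (q.2.2 • (v.1 • deriv Y q.1) + v.2.2 • Y q.1) := by
  have h1 : HasFDerivAt (fun p : ℝ × ℝ × ℝ => γ p.1)
      (((1 : ℝ →L[ℝ] ℝ).smulRight (deriv γ q.1)).comp (ContinuousLinearMap.fst ℝ ℝ (ℝ × ℝ))) q :=
    ((hγ q.1).hasDerivAt.hasFDerivAt).comp q hasFDerivAt_fst
  have hs : HasFDerivAt (fun p : ℝ × ℝ × ℝ => p.2.1)
      ((ContinuousLinearMap.fst ℝ ℝ ℝ).comp (ContinuousLinearMap.snd ℝ ℝ (ℝ × ℝ))) q :=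
    hasFDerivAt_fst.comp q hasFDerivAt_snd
  have hr : HasFDerivAt (fun p : ℝ × ℝ × ℝ => p.2.2)
      ((ContinuousLinearMap.snd ℝ ℝ ℝ).comp (ContinuousLinearMap.snd ℝ ℝ (ℝ × ℝ))) q :=
    hasFDerivAt_snd.comp q hasFDerivAt_snd
  have h2 : HasFDerivAt (fun p : ℝ × ℝ × ℝ => p.2.1 • X p.1) _ q :=
    hs.smul (((hX q.1).hasDerivAt.hasFDerivAt).comp q hasFDerivAt_fst)
  have h3 : HasFDerivAt (fun p : ℝ × ℝ × ℝ => p.2.2 • Y p.1) _ q :=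
    hr.smul (((hY q.1).hasDerivAt.hasFDerivAt).comp q hasFDerivAt_fst)
  have H := (h1.add h2).add h3
  rw [HasFDerivAt.fderiv (f := fun p : ℝ × ℝ × ℝ => γ p.1 + p.2.1 • X p.1 + p.2.2 • Y p.1) H]
  simp

/-- A pseudo-non-degenerate two-ruled hypersurface-germ (normalized) is a frontal at a
singular point iff `b₄ ≡ 0` near `0`; in that case `ν = X ∧ Y ∧ X'` is a unit normal. -/
theorem stmt1 (γ X Y : ℝ → E4) (a b₁ b₂ b₃ b₄ : ℝ → ℝ)
    (hγ : ContDiff ℝ (⊤ : ℕ∞) γ) (hX : ContDiff ℝ (⊤ : ℕ∞) X) (hY : ContDiff ℝ (⊤ : ℕ∞) Y)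
    (ha : ContDiff ℝ (⊤ : ℕ∞) a) (hb₁ : ContDiff ℝ (⊤ : ℕ∞) b₁) (hb₂ : ContDiff ℝ (⊤ : ℕ∞) b₂)
    (hb₃ : ContDiff ℝ (⊤ : ℕ∞) b₃) (hb₄ : ContDiff ℝ (⊤ : ℕ∞) b₄)
    -- constrictively adapted director curves
    (hXunit : ∀ᶠ t in 𝓝 (0:ℝ), dot4 (X t) (X t) = 1)
    (hYunit : ∀ᶠ t in 𝓝 (0:ℝ), dot4 (Y t) (Y t) = 1)
    (hXY : ∀ᶠ t in 𝓝 (0:ℝ), dot4 (X t) (Y t) = 0)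
    (hXY' : ∀ᶠ t in 𝓝 (0:ℝ), dot4 (X t) (deriv Y t) = 0)
    -- normalization: dim span {X, Y, X'} = 3 and |X'| = 1
    (hspan : ∀ᶠ t in 𝓝 (0:ℝ), LinearIndependent ℝ ![X t, Y t, deriv X t])
    (hX'unit : ∀ᶠ t in 𝓝 (0:ℝ), dot4 (deriv X t) (deriv X t) = 1)
    -- structure functions: Y' = a X' and γ' = b₁ X + b₂ Y + b₃ X' + b₄ Z
    (hY' : ∀ᶠ t in 𝓝 (0:ℝ), deriv Y t = a t • deriv X t)
    (hγ' : ∀ᶠ t in 𝓝 (0:ℝ), deriv γ t =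
      b₁ t • X t + b₂ t • Y t + b₃ t • deriv X t +
        b₄ t • tcross (X t) (Y t) (deriv X t))
    (F : ℝ × ℝ × ℝ → E4)
    (hF : F = fun p => γ p.1 + p.2.1 • X p.1 + p.2.2 • Y p.1)
    (s r : ℝ)
    (hsing : IsSingAt F (0, s, r)) :
    (IsFrontalAt F (0, s, r) ↔ ∀ᶠ t in 𝓝 (0:ℝ), b₄ t = 0) ∧
    ((∀ᶠ t in 𝓝 (0:ℝ), b₄ t = 0) →
      ∀ᶠ q in 𝓝 ((0, s, r) : ℝ × ℝ × ℝ),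
        dot4 (tcross (X q.1) (Y q.1) (deriv X q.1))
          (tcross (X q.1) (Y q.1) (deriv X q.1)) = 1 ∧
        ∀ v : ℝ × ℝ × ℝ,
          dot4 (fderiv ℝ F q v) (tcross (X q.1) (Y q.1) (deriv X q.1)) = 0) := by
  classical
  have hγd : Differentiable ℝ γ := hγ.differentiable (by simp)
  have hXd : Differentiable ℝ X := hX.differentiable (by simp)
  have hYd : Differentiable ℝ Y := hY.differentiable (by simp)
  have hfd : ∀ (q v : ℝ × ℝ × ℝ), fderiv ℝ F q v =
      v.1 • deriv γ q.1 + (q.2.1 • (v.1 • deriv X q.1) + v.2.1 • X q.1)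
        + (q.2.2 • (v.1 • deriv Y q.1) + v.2.2 • Y q.1) := by
    intro q v; rw [hF]; exact fderiv_ruled_apply hγd hXd hYd q v
  -- derived orthogonality
  have hXX' : ∀ᶠ t in 𝓝 (0:ℝ), dot4 (X t) (deriv X t) = 0 := by
    filter_upwards [hXunit.eventually_nhds] with t ht
    have h1 : HasDerivAt (fun u => dot4 (X u) (X u))
        (dot4 (deriv X t) (X t) + dot4 (X t) (deriv X t)) t :=
      hasDerivAt_dot4 (hXd t).hasDerivAt (hXd t).hasDerivAt
    have h2 : deriv (fun u => dot4 (X u) (X u)) t = deriv (fun _ : ℝ => (1:ℝ)) t :=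
      Filter.EventuallyEq.deriv_eq ht
    rw [h1.deriv, deriv_const] at h2
    have hc := dot4_comm (X t) (deriv X t)
    linarith
  have hYX' : ∀ᶠ t in 𝓝 (0:ℝ), dot4 (Y t) (deriv X t) = 0 := by
    filter_upwards [hXY.eventually_nhds, hXY'] with t ht h2
    have h1 : HasDerivAt (fun u => dot4 (X u) (Y u))
        (dot4 (deriv X t) (Y t) + dot4 (X t) (deriv Y t)) t :=
      hasDerivAt_dot4 (hXd t).hasDerivAt (hYd t).hasDerivAt
    have h3 : deriv (fun u => dot4 (X u) (Y u)) t = deriv (fun _ : ℝ => (0:ℝ)) t :=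
      Filter.EventuallyEq.deriv_eq ht
    rw [h1.deriv, deriv_const] at h3
    have hc := dot4_comm (Y t) (deriv X t)
    linarith
  have hOrtho : ∀ᶠ t in 𝓝 (0:ℝ),
      dot4 (X t) (X t) = 1 ∧ dot4 (Y t) (Y t) = 1 ∧ dot4 (deriv X t) (deriv X t) = 1 ∧
      dot4 (X t) (Y t) = 0 ∧ dot4 (X t) (deriv X t) = 0 ∧ dot4 (Y t) (deriv X t) = 0 := by
    filter_upwards [hXunit, hYunit, hX'unit, hXY, hXX', hYX'] with t h1 h2 h3 h4 h5 h6
    exact ⟨h1, h2, h3, h4, h5, h6⟩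
  -- key evaluation of the differential against any vector
  have hkey : ∀ᶠ t in 𝓝 (0:ℝ), ∀ (s' r' : ℝ) (v : ℝ × ℝ × ℝ) (n : E4),
      dot4 (fderiv ℝ F (t, s', r') v) n =
        v.1 * (b₁ t * dot4 (X t) n + b₂ t * dot4 (Y t) n
          + (b₃ t + s' + r' * a t) * dot4 (deriv X t) n
          + b₄ t * dot4 (tcross (X t) (Y t) (deriv X t)) n)
        + v.2.1 * dot4 (X t) n + v.2.2 * dot4 (Y t) n := by
    filter_upwards [hγ', hY'] with t h1 h2
    intro s' r' v n
    rw [hfd]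
    rw [show ((t, s', r') : ℝ × ℝ × ℝ).1 = t from rfl,
      show ((t, s', r') : ℝ × ℝ × ℝ).2.1 = s' from rfl,
      show ((t, s', r') : ℝ × ℝ × ℝ).2.2 = r' from rfl, h1, h2]
    simp only [dot4_add_left, dot4_smul_left, smul_add, smul_smul]
    ring
  -- facts at t = 0
  obtain ⟨o1, o2, o3, o4, o5, o6⟩ := hOrtho.self_of_nhds
  have hk0 := hkey.self_of_nhds
  have hZZ0 : dot4 (tcross (X 0) (Y 0) (deriv X 0)) (tcross (X 0) (Y 0) (deriv X 0)) = 1 :=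
    tcross_unit _ _ _ o1 o2 o3 o4 o5 o6
  have vZX' : dot4 (tcross (X 0) (Y 0) (deriv X 0)) (deriv X 0) = 0 := by
    rw [dot4_comm]; exact dot4_tc3 _ _ _
  have vXZ : dot4 (X 0) (tcross (X 0) (Y 0) (deriv X 0)) = 0 := dot4_tc1 _ _ _
  have vYZ : dot4 (Y 0) (tcross (X 0) (Y 0) (deriv X 0)) = 0 := dot4_tc2 _ _ _
  have vX'Z : dot4 (deriv X 0) (tcross (X 0) (Y 0) (deriv X 0)) = 0 := dot4_tc3 _ _ _
  have vYX : dot4 (Y 0) (X 0) = 0 := by rw [dot4_comm]; exact o4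
  have vX'X : dot4 (deriv X 0) (X 0) = 0 := by rw [dot4_comm]; exact o5
  have vZX : dot4 (tcross (X 0) (Y 0) (deriv X 0)) (X 0) = 0 := by
    rw [dot4_comm]; exact dot4_tc1 _ _ _
  have vX'Y : dot4 (deriv X 0) (Y 0) = 0 := by rw [dot4_comm]; exact o6
  have vZY : dot4 (tcross (X 0) (Y 0) (deriv X 0)) (Y 0) = 0 := by
    rw [dot4_comm]; exact dot4_tc2 _ _ _
  -- the singularity forces both structure coefficients to vanish at 0
  have hsing' : b₃ 0 + s + r * a 0 = 0 ∧ b₄ 0 = 0 := by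
    by_contra hcon
    have hcd : b₃ 0 + s + r * a 0 ≠ 0 ∨ b₄ 0 ≠ 0 := by tauto
    have li : LinearIndependent ℝ
        ![fderiv ℝ F ((0:ℝ), s, r) (0,1,0), fderiv ℝ F ((0:ℝ), s, r) (0,0,1),
          fderiv ℝ F ((0:ℝ), s, r) (1,0,0)] := by
      rw [Fintype.linearIndependent_iff]
      intro g hg
      have hdot : ∀ n : E4,
          g 0 * dot4 (fderiv ℝ F ((0:ℝ), s, r) (0,1,0)) n
          + g 1 * dot4 (fderiv ℝ F ((0:ℝ), s, r) (0,0,1)) n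
          + g 2 * dot4 (fderiv ℝ F ((0:ℝ), s, r) (1,0,0)) n = 0 := by
        intro n
        rw [Fin.sum_univ_three] at hg
        simp only [Matrix.cons_val_zero, Matrix.cons_val_one, Matrix.head_cons,
          Matrix.cons_val_two, Matrix.tail_cons] at hg
        have := congrArg (fun x => dot4 x n) hg
        simpa [dot4_add_left, dot4_smul_left, dot4_zero_left] using this
      have q1 := hdot (deriv X 0)
      have q2 := hdot (tcross (X 0) (Y 0) (deriv X 0))
      have q3 := hdot (X 0)
      have q4 := hdot (Y 0)
      rw [hk0 s r (0,1,0) (deriv X 0), hk0 s r (0,0,1) (deriv X 0),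
        hk0 s r (1,0,0) (deriv X 0), o5, o6, o3, vZX'] at q1
      rw [hk0 s r (0,1,0) (tcross (X 0) (Y 0) (deriv X 0)),
        hk0 s r (0,0,1) (tcross (X 0) (Y 0) (deriv X 0)),
        hk0 s r (1,0,0) (tcross (X 0) (Y 0) (deriv X 0)), vXZ, vYZ, vX'Z, hZZ0] at q2
      rw [hk0 s r (0,1,0) (X 0), hk0 s r (0,0,1) (X 0), hk0 s r (1,0,0) (X 0),
        o1, vYX, vX'X, vZX] at q3
      rw [hk0 s r (0,1,0) (Y 0), hk0 s r (0,0,1) (Y 0), hk0 s r (1,0,0) (Y 0),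
        o4, o2, vX'Y, vZY] at q4
      have e1 : g 2 * (b₃ 0 + s + r * a 0) = 0 := by linear_combination q1
      have e2 : g 2 * b₄ 0 = 0 := by linear_combination q2
      have hg2 : g 2 = 0 := by
        rcases hcd with h | h
        · exact (mul_eq_zero.mp e1).resolve_right h
        · exact (mul_eq_zero.mp e2).resolve_right h
      have hg0 : g 0 = 0 := by linear_combination q3 - b₁ 0 * hg2
      have hg1 : g 1 = 0 := by linear_combination q4 - b₂ 0 * hg2
      intro i
      fin_cases i
      · exact hg0
      · exact hg1
      · exact hg2
    have hsub : Submodule.span ℝ (Set.range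
        ![fderiv ℝ F ((0:ℝ), s, r) (0,1,0), fderiv ℝ F ((0:ℝ), s, r) (0,0,1),
          fderiv ℝ F ((0:ℝ), s, r) (1,0,0)]) ≤
        LinearMap.range (fderiv ℝ F ((0:ℝ), s, r)).toLinearMap := by
      rw [Submodule.span_le]
      rintro x ⟨i, rfl⟩
      fin_cases i
      · exact ⟨(0,1,0), rfl⟩
      · exact ⟨(0,0,1), rfl⟩
      · exact ⟨(1,0,0), rfl⟩
    have hge := Submodule.finrank_mono hsub
    rw [finrank_span_eq_card li] at hge
    have hlt : Module.finrank ℝ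
        ↥(LinearMap.range (fderiv ℝ F ((0:ℝ), s, r)).toLinearMap) < 3 := hsing
    simp at hge
    omega
  obtain ⟨hc0, hd0⟩ := hsing'
  -- eventual facts pulled back along the first projection
  have hpull : ∀ᶠ q : ℝ × ℝ × ℝ in 𝓝 ((0:ℝ), s, r),
      (dot4 (X q.1) (X q.1) = 1 ∧ dot4 (Y q.1) (Y q.1) = 1 ∧
       dot4 (deriv X q.1) (deriv X q.1) = 1 ∧ dot4 (X q.1) (Y q.1) = 0 ∧
       dot4 (X q.1) (deriv X q.1) = 0 ∧ dot4 (Y q.1) (deriv X q.1) = 0) ∧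
      (∀ (s' r' : ℝ) (v : ℝ × ℝ × ℝ) (n : E4),
        dot4 (fderiv ℝ F (q.1, s', r') v) n =
          v.1 * (b₁ q.1 * dot4 (X q.1) n + b₂ q.1 * dot4 (Y q.1) n
            + (b₃ q.1 + s' + r' * a q.1) * dot4 (deriv X q.1) n
            + b₄ q.1 * dot4 (tcross (X q.1) (Y q.1) (deriv X q.1)) n)
          + v.2.1 * dot4 (X q.1) n + v.2.2 * dot4 (Y q.1) n) :=
    (continuous_fst.tendsto ((0:ℝ), s, r)).eventually (hOrtho.and hkey)
  -- the unit normal property of Z when b₄ ≡ 0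
  have hnormal : (∀ᶠ t in 𝓝 (0:ℝ), b₄ t = 0) →
      ∀ᶠ q in 𝓝 ((0, s, r) : ℝ × ℝ × ℝ),
        dot4 (tcross (X q.1) (Y q.1) (deriv X q.1))
          (tcross (X q.1) (Y q.1) (deriv X q.1)) = 1 ∧
        ∀ v : ℝ × ℝ × ℝ,
          dot4 (fderiv ℝ F q v) (tcross (X q.1) (Y q.1) (deriv X q.1)) = 0 := by
    intro hb
    have hbq : ∀ᶠ q : ℝ × ℝ × ℝ in 𝓝 ((0:ℝ), s, r), b₄ q.1 = 0 :=
      (continuous_fst.tendsto ((0:ℝ), s, r)).eventually hb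
    filter_upwards [hpull, hbq] with q hq hb0
    obtain ⟨⟨p1, p2, p3, p4, p5, p6⟩, hk⟩ := hq
    refine ⟨tcross_unit _ _ _ p1 p2 p3 p4 p5 p6, fun v => ?_⟩
    have h : dot4 (fderiv ℝ F q v) (tcross (X q.1) (Y q.1) (deriv X q.1)) =
        v.1 * (b₁ q.1 * dot4 (X q.1) (tcross (X q.1) (Y q.1) (deriv X q.1))
          + b₂ q.1 * dot4 (Y q.1) (tcross (X q.1) (Y q.1) (deriv X q.1))
          + (b₃ q.1 + q.2.1 + q.2.2 * a q.1) *
              dot4 (deriv X q.1) (tcross (X q.1) (Y q.1) (deriv X q.1))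
          + b₄ q.1 * dot4 (tcross (X q.1) (Y q.1) (deriv X q.1))
              (tcross (X q.1) (Y q.1) (deriv X q.1)))
        + v.2.1 * dot4 (X q.1) (tcross (X q.1) (Y q.1) (deriv X q.1))
        + v.2.2 * dot4 (Y q.1) (tcross (X q.1) (Y q.1) (deriv X q.1)) :=
      hk q.2.1 q.2.2 v (tcross (X q.1) (Y q.1) (deriv X q.1))
    rw [h, dot4_tc1, dot4_tc2, dot4_tc3, hb0]
    ring
  refine ⟨⟨fun hfr => ?_, fun hb => ⟨fun q => tcross (X q.1) (Y q.1) (deriv X q.1),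
    (contDiff_tcross hX hY (contDiff_deriv_curve hX)).comp contDiff_fst, hnormal hb⟩⟩, hnormal⟩
  -- the hard direction: frontal implies b₄ ≡ 0
  obtain ⟨ν, hνsm, hνev⟩ := hfr
  have hνc : Continuous ν := hνsm.continuous
  have hX'c : Continuous (deriv X) := (contDiff_deriv_curve hX).continuous
  have hZc : Continuous (fun t => tcross (X t) (Y t) (deriv X t)) :=
    (contDiff_tcross hX hY (contDiff_deriv_curve hX)).continuous
  -- the fundamental relation and Parseval identity near the singular point
  have hrel : ∀ᶠ q : ℝ × ℝ × ℝ in 𝓝 ((0:ℝ), s, r),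
      ((b₃ q.1 + q.2.1 + q.2.2 * a q.1) * dot4 (deriv X q.1) (ν q)
        + b₄ q.1 * dot4 (tcross (X q.1) (Y q.1) (deriv X q.1)) (ν q) = 0) ∧
      (dot4 (deriv X q.1) (ν q) ^ 2
        + dot4 (tcross (X q.1) (Y q.1) (deriv X q.1)) (ν q) ^ 2 = 1) := by
    filter_upwards [hpull, hνev] with q hq hν
    obtain ⟨⟨p1, p2, p3, p4, p5, p6⟩, hk⟩ := hq
    obtain ⟨hν1, hν2⟩ := hν
    have eX : dot4 (X q.1) (ν q) = 0 := by
      have h : dot4 (fderiv ℝ F q ((0:ℝ),(1:ℝ),(0:ℝ))) (ν q) = _ := hk q.2.1 q.2.2 (0,1,0) (ν q)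
      have h2 := hν2 (0,1,0)
      rw [h] at h2
      norm_num at h2
      linear_combination h2
    have eY : dot4 (Y q.1) (ν q) = 0 := by
      have h : dot4 (fderiv ℝ F q ((0:ℝ),(0:ℝ),(1:ℝ))) (ν q) = _ := hk q.2.1 q.2.2 (0,0,1) (ν q)
      have h2 := hν2 (0,0,1)
      rw [h] at h2
      norm_num at h2
      linear_combination h2
    constructor
    · have h : dot4 (fderiv ℝ F q ((1:ℝ),(0:ℝ),(0:ℝ))) (ν q) = _ := hk q.2.1 q.2.2 (1,0,0) (ν q)
      have h2 := hν2 (1,0,0)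
      rw [h, eX, eY] at h2
      norm_num at h2
      linear_combination h2
    · have hp := parseval (X q.1) (Y q.1) (deriv X q.1) (ν q) p1 p2 p3 p4 p5 p6
      rw [eX, eY, hν1] at hp
      norm_num at hp
      linarith [hp]
  -- α vanishes at the singular point
  have hαp : dot4 (deriv X 0) (ν ((0:ℝ), s, r)) = 0 := by
    have hgc : Continuous (fun u : ℝ => ((0:ℝ), s + u, r)) := by
      exact continuous_const.prodMk ((continuous_const.add continuous_id).prodMk continuous_const)
    have hg0 : Tendsto (fun u : ℝ => ((0:ℝ), s + u, r)) (𝓝 0) (𝓝 ((0:ℝ), s, r)) := by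
      have h := hgc.tendsto 0
      simpa using h
    have hev := hg0.eventually hrel
    have hαzero : ∀ᶠ u in 𝓝[≠] (0:ℝ), dot4 (deriv X 0) (ν ((0:ℝ), s + u, r)) = 0 := by
      filter_upwards [hev.filter_mono nhdsWithin_le_nhds, self_mem_nhdsWithin] with u hu hne
      have hne' : u ≠ 0 := hne
      obtain ⟨hu1, _⟩ := hu
      have hcoef : b₃ 0 + (s + u) + r * a 0 = u := by linarith
      rw [hcoef, hd0, zero_mul, add_zero] at hu1
      exact (mul_eq_zero.mp hu1).resolve_left hne'
    have ht1 : Tendsto (fun u : ℝ => dot4 (deriv X 0) (ν ((0:ℝ), s + u, r))) (𝓝[≠] 0)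
        (𝓝 (dot4 (deriv X 0) (ν ((0:ℝ), s, r)))) := by
      have hc : Continuous fun u : ℝ => dot4 (deriv X 0) (ν ((0:ℝ), s + u, r)) :=
        continuous_dot4 continuous_const (hνc.comp
          (continuous_const.prodMk ((continuous_const.add continuous_id).prodMk continuous_const)))
      have h := hc.tendsto 0
      simp only [add_zero] at h
      exact h.mono_left nhdsWithin_le_nhds
    have ht2 : Tendsto (fun u : ℝ => dot4 (deriv X 0) (ν ((0:ℝ), s + u, r))) (𝓝[≠] 0) (𝓝 0) :=
      tendsto_const_nhds.congr' (hαzero.mono fun u hu => hu.symm)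
    exact tendsto_nhds_unique ht1 ht2
  -- conclude by contradiction
  by_contra hb4
  have hfreq : ∃ᶠ t in 𝓝 (0:ℝ), b₄ t ≠ 0 := Filter.not_eventually.mp hb4
  have hφc : Continuous (fun t : ℝ => ((t, -b₃ t - r * a t, r) : ℝ × ℝ × ℝ)) :=
    continuous_id.prodMk
      (((hb₃.continuous.neg).sub (continuous_const.mul ha.continuous)).prodMk continuous_const)
  have hφ0 : ((0:ℝ), -b₃ 0 - r * a 0, r) = (((0:ℝ), s, r) : ℝ × ℝ × ℝ) := by
    have hsv : -b₃ 0 - r * a 0 = s := by linarith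
    rw [hsv]
  have hφt : Tendsto (fun t : ℝ => ((t, -b₃ t - r * a t, r) : ℝ × ℝ × ℝ)) (𝓝 0)
      (𝓝 ((0:ℝ), s, r)) := by
    have h := hφc.tendsto 0
    rw [hφ0] at h
    exact h
  have hrelφ := hφt.eventually hrel
  have hαφ : Tendsto (fun t : ℝ => dot4 (deriv X t) (ν (t, -b₃ t - r * a t, r))) (𝓝 0) (𝓝 0) := by
    have hc : Continuous fun t : ℝ => dot4 (deriv X t) (ν (t, -b₃ t - r * a t, r)) :=
      continuous_dot4 hX'c (hνc.comp hφc)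
    have h := hc.tendsto 0
    have h2 : dot4 (deriv X 0) (ν ((0:ℝ), -b₃ 0 - r * a 0, r)) = 0 := by
      rw [hφ0]; exact hαp
    rw [h2] at h
    exact h
  have hsmall : ∀ᶠ t in 𝓝 (0:ℝ),
      |dot4 (deriv X t) (ν (t, -b₃ t - r * a t, r))| < 1/2 := by
    have h := Metric.tendsto_nhds.mp hαφ (1/2) (by norm_num)
    filter_upwards [h] with t ht
    simpa [Real.dist_eq] using ht
  obtain ⟨t, hbt, ⟨hr1, hr2⟩, hlt⟩ := (hfreq.and_eventually (hrelφ.and hsmall)).exists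
  have hco : b₃ t + (-b₃ t - r * a t) + r * a t = 0 := by ring
  rw [hco, zero_mul, zero_add] at hr1
  have hB : dot4 (tcross (X t) (Y t) (deriv X t)) (ν (t, -b₃ t - r * a t, r)) = 0 :=
    (mul_eq_zero.mp hr1).resolve_left hbt
  rw [hB] at hr2
  obtain ⟨hl1, hl2⟩ := abs_lt.mp hlt
  nlinarith [hr2, hl1, hl2]
end
end

section
/- A pseudo-non-degenerate two-ruled hypersurface f(t,s,r)=γ(t)+sX(t)+rY(t) in ℝ⁴ (normalized, with associated functions a,b₁,b₂,b₃,b₄) is of cylinder type if and only if a'(t)=0 for all t near 0. -/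
open scoped Topology
open Filter

noncomputable section

lemma dot4_expand (r : ℝ) (x y : E4) :
    dot4 (r • x + y) (r • x + y) = r^2 * dot4 x x + 2*r*dot4 x y + dot4 y y := by
  simp only [dot4, Pi.add_apply, Pi.smul_apply, smul_eq_mul, Finset.mul_sum,
    ← Finset.sum_add_distrib]
  exact Finset.sum_congr rfl fun i _ => by ring

/-- A pseudo-non-degenerate two-ruled hypersurface (normalized) is of cylinder type
(its striction surface `σ₁(t,r) = γ̃(t)+rX̃(t)` is a cylinder, i.e. `X̃' ≡ 0` near `0`)
if and only if `a' ≡ 0` near `0`. -/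
theorem stmt7 (γ X Y : ℝ → E4) (a b₁ b₂ b₃ b₄ : ℝ → ℝ)
    (hγ : ContDiff ℝ (⊤ : ℕ∞) γ) (hX : ContDiff ℝ (⊤ : ℕ∞) X) (hY : ContDiff ℝ (⊤ : ℕ∞) Y)
    (ha : ContDiff ℝ (⊤ : ℕ∞) a) (hb₁ : ContDiff ℝ (⊤ : ℕ∞) b₁) (hb₂ : ContDiff ℝ (⊤ : ℕ∞) b₂)
    (hb₃ : ContDiff ℝ (⊤ : ℕ∞) b₃) (hb₄ : ContDiff ℝ (⊤ : ℕ∞) b₄)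
    -- constrictively adapted director curves
    (hXunit : ∀ᶠ t in 𝓝 (0:ℝ), dot4 (X t) (X t) = 1)
    (hYunit : ∀ᶠ t in 𝓝 (0:ℝ), dot4 (Y t) (Y t) = 1)
    (hXY : ∀ᶠ t in 𝓝 (0:ℝ), dot4 (X t) (Y t) = 0)
    (hXY' : ∀ᶠ t in 𝓝 (0:ℝ), dot4 (X t) (deriv Y t) = 0)
    -- normalization
    (hspan : ∀ᶠ t in 𝓝 (0:ℝ), LinearIndependent ℝ ![X t, Y t, deriv X t])
    (hX'unit : ∀ᶠ t in 𝓝 (0:ℝ), dot4 (deriv X t) (deriv X t) = 1)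
    -- structure functions
    (hY' : ∀ᶠ t in 𝓝 (0:ℝ), deriv Y t = a t • deriv X t)
    (hγ' : ∀ᶠ t in 𝓝 (0:ℝ), deriv γ t =
      b₁ t • X t + b₂ t • Y t + b₃ t • deriv X t +
        b₄ t • tcross (X t) (Y t) (deriv X t))
    (Xtil : ℝ → E4)
    (hXtil : Xtil = fun t =>
      (Real.sqrt (dot4 (-(a t) • X t + Y t) (-(a t) • X t + Y t)))⁻¹ •
        (-(a t) • X t + Y t)) :
    (∀ᶠ t in 𝓝 (0:ℝ), deriv Xtil t = 0) ↔ (∀ᶠ t in 𝓝 (0:ℝ), deriv a t = 0) := by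
  obtain ⟨s, hs, hso, h0s⟩ := eventually_nhds_iff.mp
    (hXunit.and (hYunit.and (hXY.and (hspan.and hY'))))
  have hderiv : ∀ t ∈ s, deriv Xtil t =
      (-(deriv a t) * ((Real.sqrt ((a t)^2+1))⁻¹)^3) • X t +
      (-(a t) * deriv a t * ((Real.sqrt ((a t)^2+1))⁻¹)^3) • Y t := by
    intro t ht
    obtain ⟨hXu, hYu, hXYt, hsp, hY't⟩ := hs t ht
    have hEq : Xtil =ᶠ[𝓝 t]
        fun r => (Real.sqrt ((a r)^2+1))⁻¹ • (-(a r) • X r + Y r) := by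
      filter_upwards [hso.mem_nhds ht] with r hr
      obtain ⟨hXu', hYu', hXY2, _, _⟩ := hs r hr
      have hd : dot4 (-(a r) • X r + Y r) (-(a r) • X r + Y r) = (a r)^2 + 1 := by
        rw [dot4_expand, hXu', hXY2, hYu']; ring
      rw [hXtil]; simp only [hd]
    rw [hEq.deriv_eq]
    have haD := (ha.differentiable (by simp) t).hasDerivAt
    have hXD := (hX.differentiable (by simp) t).hasDerivAt
    have hYD := (hY.differentiable (by simp) t).hasDerivAt
    have hwpos : (0:ℝ) < (a t)^2 + 1 := by positivity
    have hsq : Real.sqrt ((a t)^2+1) ≠ 0 := by positivity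
    have hsq2 : (Real.sqrt ((a t)^2+1))^2 = (a t)^2 + 1 := Real.sq_sqrt hwpos.le
    have hw : HasDerivAt (fun r => (a r)^2 + 1) (2 * a t * deriv a t) t := by
      have h2 := (haD.fun_pow 2).add_const 1
      refine h2.congr_deriv ?_
      push_cast; ring
    have hS : HasDerivAt (fun r => Real.sqrt ((a r)^2+1))
        (1/(2*Real.sqrt ((a t)^2+1)) * (2 * a t * deriv a t)) t :=
      (Real.hasDerivAt_sqrt hwpos.ne').comp t hw
    set q := Real.sqrt ((a t)^2+1) with hq
    have hC : HasDerivAt (fun r => (Real.sqrt ((a r)^2+1))⁻¹)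
        (-(a t * deriv a t) * (q⁻¹)^3) t := by
      have h3 := hS.fun_inv hsq
      rw [← hq] at h3
      refine h3.congr_deriv ?_
      field_simp
    have hu : HasDerivAt (fun r => -(a r) • X r + Y r)
        ((-(deriv a t)) • X t) t := by
      have h4 := (haD.fun_neg.fun_smul hXD).fun_add hYD
      refine h4.congr_deriv ?_
      rw [hY't]
      module
    have hG := hC.fun_smul hu
    rw [hG.deriv, ← hq]
    match_scalars
    · field_simp
      linear_combination (-deriv a t) * hsq2
    · field_simp
  constructor
  · intro h
    filter_upwards [h, hso.mem_nhds h0s] with t h0 hts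
    rw [hderiv t hts] at h0
    obtain ⟨_, _, _, hsp, _⟩ := hs t hts
    have hkey := Fintype.linearIndependent_iff.mp hsp
      ![(-(deriv a t) * ((Real.sqrt ((a t)^2+1))⁻¹)^3),
        (-(a t) * deriv a t * ((Real.sqrt ((a t)^2+1))⁻¹)^3), 0]
      (by simpa [Fin.sum_univ_three] using h0) 0
    have hsq : Real.sqrt ((a t)^2+1) ≠ 0 := by positivity
    simp only [Matrix.cons_val_zero] at hkey
    field_simp at hkey
    simpa using hkey
  · intro h
    filter_upwards [h, hso.mem_nhds h0s] with t ha' hts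
    rw [hderiv t hts, ha']
    simp
end
end
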